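/- arXiv:1212.5515 — 3 statements merged into one kernel-verified Lean document; each statement's English description precedes it below -/
import Mathlib

section
/- Let L > 0, let E be a real inner product space (for instance ℝⁿ), and let f : ℝ → E be a continuously differentiable function which is L-periodic. Then for every x ∈ ℝ, ‖f(x)‖² ≤ (1/L + 2)·∫₀^L ‖f(u)‖² du + 2·∫₀^L ‖f'(u)‖² du. -/
/-!
Write `g = ‖f‖²`. Averaging over a period gives a point `y` with `L g(y) ≤ ∫₀^L g`, and by the
fundamental theorem of calculus along at most one period, `g(x) - g(y) ≤ ∫₀^L |g'|`. Finally
`|g'| = 2|⟪f, f'⟫| ≤ ‖f‖² + ‖f'‖²`.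
-/

open intervalIntegral MeasureTheory Set

theorem Function.Periodic.deriv {𝕜 F : Type*} [NontriviallyNormedField 𝕜] [NormedAddCommGroup F]
    [NormedSpace 𝕜 F] {f : 𝕜 → F} {c : 𝕜} (hf : Function.Periodic f c) :
    Function.Periodic (deriv f) c := fun u => by
  rw [← deriv_comp_add_const, funext hf]

theorem exists_mul_le_intervalIntegral {g : ℝ → ℝ} {a b : ℝ} (hab : a < b)
    (hg : IntervalIntegrable g volume a b) : ∃ y, (b - a) * g y ≤ ∫ u in a..b, g u := by
  obtain ⟨y, -, hy⟩ := exists_le_setAverage (s := Ioc a b) (μ := volume) (by simp [hab])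
    (by simp) hg.1
  rw [setAverage_eq, Real.volume_real_Ioc_of_le hab.le, smul_eq_mul, ← integral_of_le hab.le,
    inv_mul_eq_div, le_div_iff₀' (sub_pos.2 hab)] at hy
  exact ⟨y, hy⟩

theorem sub_le_integral_abs_deriv_of_le {g : ℝ → ℝ} (hg : ContDiff ℝ 1 g) {x y : ℝ} (hyx : y ≤ x) :
    g x - g y ≤ ∫ u in y..x, |deriv g u| := by
  rw [← integral_deriv_eq_sub (fun u _ => hg.differentiable one_ne_zero u)
    ((hg.continuous_deriv le_rfl).intervalIntegrable y x)]
  exact (le_abs_self _).trans (abs_integral_le_integral_abs hyx)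

theorem sub_le_integral_abs_deriv_of_periodic {g : ℝ → ℝ} {L : ℝ}
    (hper : Function.Periodic g L) (hL : 0 < L) (hg : ContDiff ℝ 1 g) (x y : ℝ) :
    g x - g y ≤ ∫ u in (0:ℝ)..L, |deriv g u| := by
  obtain ⟨x₁, ⟨hyx₁, hx₁L⟩, hx₁⟩ := hper.exists_mem_Ico hL x y
  have habs_per : Function.Periodic (fun u => |deriv g u|) L := fun u => by
    simp only [hper.deriv u]
  calc g x - g y = g x₁ - g y := by rw [hx₁]
    _ ≤ ∫ u in y..x₁, |deriv g u| := sub_le_integral_abs_deriv_of_le hg hyx₁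
    _ ≤ ∫ u in y..y + L, |deriv g u| :=
        integral_mono_interval le_rfl hyx₁ hx₁L.le (.of_forall fun _ => abs_nonneg _)
          ((hg.continuous_deriv le_rfl).abs.intervalIntegrable _ _)
    _ = ∫ u in (0:ℝ)..L, |deriv g u| := by simpa using habs_per.intervalIntegral_add_eq y 0

theorem abs_deriv_norm_sq_le {E : Type*} [NormedAddCommGroup E] [InnerProductSpace ℝ E]
    {f : ℝ → E} {u : ℝ} (hf : DifferentiableAt ℝ f u) :
    |deriv (‖f ·‖ ^ 2) u| ≤ ‖f u‖ ^ 2 + ‖deriv f u‖ ^ 2 := by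
  rw [hf.hasDerivAt.norm_sq.deriv, abs_mul, abs_two]
  nlinarith [abs_real_inner_le_norm (f u) (deriv f u), two_mul_le_add_sq ‖f u‖ ‖deriv f u‖]

/-- **Interpolation inequality (4.1a).** For an `L`-periodic `C¹` function `f` with values in a
real inner product space, `‖f(x)‖² ≤ (1/L + 2)·∫₀^L ‖f‖² + 2·∫₀^L ‖f'‖²`. -/
theorem sup_sq_le_interpolation
    {E : Type*} [NormedAddCommGroup E] [InnerProductSpace ℝ E]
    (L : ℝ) (hL : 0 < L) (f : ℝ → E) (hf : ContDiff ℝ 1 f)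
    (hper : Function.Periodic f L) (x : ℝ) :
    ‖f x‖ ^ 2 ≤ (1 / L + 2) * (∫ u in (0:ℝ)..L, ‖f u‖ ^ 2)
      + 2 * ∫ u in (0:ℝ)..L, ‖deriv f u‖ ^ 2 := by
  set I := ∫ u in (0:ℝ)..L, ‖f u‖ ^ 2
  set J := ∫ u in (0:ℝ)..L, ‖deriv f u‖ ^ 2
  have hsq : ContDiff ℝ 1 (‖f ·‖ ^ 2) := hf.norm_sq ℝ
  have hf'sq : Continuous (‖deriv f ·‖ ^ 2) := (hf.continuous_deriv le_rfl).norm.pow 2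
  obtain ⟨y, hy⟩ := exists_mul_le_intervalIntegral hL (hsq.continuous.intervalIntegrable 0 L)
  have hosc := sub_le_integral_abs_deriv_of_periodic (fun u => by simp only [hper u]) hL hsq x y
  have hvar : ∫ u in (0:ℝ)..L, |deriv (‖f ·‖ ^ 2) u| ≤ I + J := by
    rw [← integral_add (hsq.continuous.intervalIntegrable 0 L) (hf'sq.intervalIntegrable 0 L)]
    exact integral_mono_on hL.le ((hsq.continuous_deriv le_rfl).abs.intervalIntegrable 0 L)
      ((hsq.continuous.add hf'sq).intervalIntegrable 0 L)
      fun u _ => abs_deriv_norm_sq_le (hf.differentiable one_ne_zero u)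
  have hI : 0 ≤ I := integral_nonneg hL.le fun u _ => sq_nonneg _
  have hJ : 0 ≤ J := integral_nonneg hL.le fun u _ => sq_nonneg _
  have hy' : ‖f y‖ ^ 2 ≤ 1 / L * I := by
    rw [one_div_mul_eq_div, le_div_iff₀' hL]; simpa using hy
  linarith
end

section
/- Let γ : ℝ × I → ℝⁿ be a solution of the curve shortening flow. Then the squared curvature satisfies ∂ₜ|k|² = ∂ₛ²(|k|²) − 2·|∂ₛk|² + 4·|k|⁴, where ∂ₛk = |∂ᵤγ|⁻¹ ∂ᵤk. -/
open Set Filter MeasureTheory intervalIntegral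
open scoped RealInnerProductSpace ENNReal

noncomputable section

/-- The spatial derivative `∂ᵤ f` of a time-dependent map `f(u, t)`. -/
def spaceDeriv {F : Type*} [NormedAddCommGroup F] [NormedSpace ℝ F]
    (f : ℝ → ℝ → F) (u t : ℝ) : F :=
  deriv (fun v => f v t) u

/-- The arclength derivative `∂ₛ f = |∂ᵤγ|⁻¹ ∂ᵤ f` along the curve family `γ`. -/
def arcDeriv {E F : Type*} [NormedAddCommGroup E] [NormedSpace ℝ E]
    [NormedAddCommGroup F] [NormedSpace ℝ F]
    (γ : ℝ → ℝ → E) (f : ℝ → ℝ → F) (u t : ℝ) : F :=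
  ‖spaceDeriv γ u t‖⁻¹ • spaceDeriv f u t

/-- The unit tangent vector `T = ∂ₛ γ`. -/
def unitTangent {E : Type*} [NormedAddCommGroup E] [NormedSpace ℝ E]
    (γ : ℝ → ℝ → E) (u t : ℝ) : E :=
  arcDeriv γ γ u t

/-- The curvature vector `k = ∂ₛ T`. -/
def curvVec {E : Type*} [NormedAddCommGroup E] [NormedSpace ℝ E]
    (γ : ℝ → ℝ → E) (u t : ℝ) : E :=
  arcDeriv γ (unitTangent γ) u t

/-- `γ` is a solution of the curve shortening flow on the time set `I`: it is smooth,
`1`-periodic in the space variable, immersed (`∂ᵤγ ≠ 0`), and satisfies `∂ₜγ = k` on `I`. -/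
structure IsCSF {E : Type*} [NormedAddCommGroup E] [NormedSpace ℝ E]
    (γ : ℝ → ℝ → E) (I : Set ℝ) : Prop where
  smooth : ContDiff ℝ (⊤ : ℕ∞) (Function.uncurry γ)
  periodic : ∀ u : ℝ, ∀ t ∈ I, γ (u + 1) t = γ u t
  immersed : ∀ u : ℝ, ∀ t ∈ I, spaceDeriv γ u t ≠ 0
  flow : ∀ u : ℝ, ∀ t ∈ I, HasDerivWithinAt (fun s => γ u s) (curvVec γ u t) I t


namespace CSFAux

open Function

variable {F : Type*} [NormedAddCommGroup F] [NormedSpace ℝ F]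


variable {F : Type*} [NormedAddCommGroup F] [NormedSpace ℝ F]

def timeDeriv (f : ℝ → ℝ → F) (u t : ℝ) : F := deriv (fun s => f u s) t

/-- smooth (all finite orders) on a set, in uncurried form -/
def SmOn (f : ℝ → ℝ → F) (Ω : Set (ℝ × ℝ)) : Prop :=
  ∀ m : ℕ, ContDiffOn ℝ m (uncurry f) Ω

theorem hasDerivAt_slice_fst {f : ℝ → ℝ → F} {u t : ℝ}
    (hf : DifferentiableAt ℝ (uncurry f) (u, t)) :
    HasDerivAt (fun v => f v t) (fderiv ℝ (uncurry f) (u, t) (1, 0)) u := by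
  have h1 : HasDerivAt (fun v : ℝ => ((v, t) : ℝ × ℝ)) ((1 : ℝ), (0 : ℝ)) u :=
    (hasDerivAt_id u).prodMk (hasDerivAt_const u t)
  exact hf.hasFDerivAt.comp_hasDerivAt u h1

theorem hasDerivAt_slice_snd {f : ℝ → ℝ → F} {u t : ℝ}
    (hf : DifferentiableAt ℝ (uncurry f) (u, t)) :
    HasDerivAt (fun s => f u s) (fderiv ℝ (uncurry f) (u, t) (0, 1)) t := by
  have h1 : HasDerivAt (fun s : ℝ => ((u, s) : ℝ × ℝ)) ((0 : ℝ), (1 : ℝ)) t :=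
    (hasDerivAt_const t u).prodMk (hasDerivAt_id t)
  exact hf.hasFDerivAt.comp_hasDerivAt t h1

variable {f : ℝ → ℝ → F} {Ω : Set (ℝ × ℝ)} {u t : ℝ}

theorem SmOn.contDiffAt (hf : SmOn f Ω) (hΩ : IsOpen Ω) (hx : (u, t) ∈ Ω) (m : ℕ) :
    ContDiffAt ℝ m (uncurry f) (u, t) :=
  (hf m).contDiffAt (hΩ.mem_nhds hx)

theorem SmOn.differentiableAt (hf : SmOn f Ω) (hΩ : IsOpen Ω) (hx : (u, t) ∈ Ω) :
    DifferentiableAt ℝ (uncurry f) (u, t) :=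
  (hf.contDiffAt hΩ hx 1).differentiableAt (by norm_num)

theorem spaceDeriv_eq (hf : DifferentiableAt ℝ (uncurry f) (u, t)) :
    spaceDeriv f u t = fderiv ℝ (uncurry f) (u, t) (1, 0) :=
  (hasDerivAt_slice_fst hf).deriv

theorem timeDeriv_eq (hf : DifferentiableAt ℝ (uncurry f) (u, t)) :
    timeDeriv f u t = fderiv ℝ (uncurry f) (u, t) (0, 1) :=
  (hasDerivAt_slice_snd hf).deriv

theorem SmOn.hasDerivAt_space (hf : SmOn f Ω) (hΩ : IsOpen Ω) (hx : (u, t) ∈ Ω) :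
    HasDerivAt (fun v => f v t) (spaceDeriv f u t) u := by
  have h := hasDerivAt_slice_fst (hf.differentiableAt hΩ hx)
  rwa [spaceDeriv, h.deriv]

theorem SmOn.hasDerivAt_time (hf : SmOn f Ω) (hΩ : IsOpen Ω) (hx : (u, t) ∈ Ω) :
    HasDerivAt (fun s => f u s) (timeDeriv f u t) t := by
  have h := hasDerivAt_slice_snd (hf.differentiableAt hΩ hx)
  rwa [timeDeriv, h.deriv]

theorem SmOn.spaceDeriv (hf : SmOn f Ω) (hΩ : IsOpen Ω) : SmOn (spaceDeriv f) Ω := by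
  intro m
  have h1 : ContDiffOn ℝ m (fun y => fderiv ℝ (uncurry f) y ((1 : ℝ), (0 : ℝ))) Ω := by
    apply (ContinuousLinearMap.apply ℝ F ((1 : ℝ), (0 : ℝ))).contDiff.comp_contDiffOn
    exact (hf (m + 1)).fderiv_of_isOpen hΩ (by exact_mod_cast le_refl (m + 1 : ℕ))
  refine h1.congr fun y hy => ?_
  have : DifferentiableAt ℝ (uncurry f) (y.1, y.2) := hf.differentiableAt hΩ (by simpa using hy)
  simpa [uncurry] using spaceDeriv_eq this

theorem SmOn.timeDeriv (hf : SmOn f Ω) (hΩ : IsOpen Ω) : SmOn (CSFAux.timeDeriv f) Ω := by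
  intro m
  have h1 : ContDiffOn ℝ m (fun y => fderiv ℝ (uncurry f) y ((0 : ℝ), (1 : ℝ))) Ω := by
    apply (ContinuousLinearMap.apply ℝ F ((0 : ℝ), (1 : ℝ))).contDiff.comp_contDiffOn
    exact (hf (m + 1)).fderiv_of_isOpen hΩ (by exact_mod_cast le_refl (m + 1 : ℕ))
  refine h1.congr fun y hy => ?_
  have : DifferentiableAt ℝ (uncurry f) (y.1, y.2) := hf.differentiableAt hΩ (by simpa using hy)
  simpa [uncurry] using timeDeriv_eq this

/-- Schwarz / Clairaut: mixed partials commute for `C²` functions. -/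
theorem SmOn.symm (hf : SmOn f Ω) (hΩ : IsOpen Ω) (hx : (u, t) ∈ Ω) :
    CSFAux.timeDeriv (_root_.spaceDeriv f) u t = _root_.spaceDeriv (CSFAux.timeDeriv f) u t := by
  have hsymm : IsSymmSndFDerivAt ℝ (uncurry f) (u, t) :=
    (hf.contDiffAt hΩ hx 2).isSymmSndFDerivAt (by simp)
  have hd2 : DifferentiableAt ℝ (fderiv ℝ (uncurry f)) (u, t) :=
    ((hf.contDiffAt hΩ hx 2).fderiv_right (m := 1) (by exact_mod_cast le_refl (2 : ℕ))).differentiableAt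
      (by norm_num)
  -- LHS
  have hevt : (fun s => _root_.spaceDeriv f u s) =ᶠ[nhds t]
      (fun s => fderiv ℝ (uncurry f) (u, s) ((1 : ℝ), (0 : ℝ))) := by
    have hopen : IsOpen {s : ℝ | (u, s) ∈ Ω} := hΩ.preimage (by fun_prop)
    filter_upwards [hopen.mem_nhds hx] with s hs
    exact spaceDeriv_eq (hf.differentiableAt hΩ hs)
  have h1 : HasDerivAt (fun s : ℝ => ((u, s) : ℝ × ℝ)) ((0 : ℝ), (1 : ℝ)) t :=
    (hasDerivAt_const t u).prodMk (hasDerivAt_id t)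
  have h2 : HasDerivAt (fun s => fderiv ℝ (uncurry f) (u, s))
      (fderiv ℝ (fderiv ℝ (uncurry f)) (u, t) ((0 : ℝ), (1 : ℝ))) t :=
    hd2.hasFDerivAt.comp_hasDerivAt t h1
  have h3 : HasDerivAt (fun s => fderiv ℝ (uncurry f) (u, s) ((1 : ℝ), (0 : ℝ)))
      (fderiv ℝ (fderiv ℝ (uncurry f)) (u, t) ((0 : ℝ), (1 : ℝ)) ((1 : ℝ), (0 : ℝ))) t :=
    (ContinuousLinearMap.apply ℝ F ((1 : ℝ), (0 : ℝ))).hasFDerivAt.comp_hasDerivAt t h2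
  have hL : CSFAux.timeDeriv (_root_.spaceDeriv f) u t
      = fderiv ℝ (fderiv ℝ (uncurry f)) (u, t) ((0 : ℝ), (1 : ℝ)) ((1 : ℝ), (0 : ℝ)) := by
    rw [CSFAux.timeDeriv, hevt.deriv_eq, h3.deriv]
  -- RHS
  have hevu : (fun v => CSFAux.timeDeriv f v t) =ᶠ[nhds u]
      (fun v => fderiv ℝ (uncurry f) (v, t) ((0 : ℝ), (1 : ℝ))) := by
    have hopen : IsOpen {v : ℝ | (v, t) ∈ Ω} := hΩ.preimage (by fun_prop)
    filter_upwards [hopen.mem_nhds hx] with v hv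
    exact timeDeriv_eq (hf.differentiableAt hΩ hv)
  have h1' : HasDerivAt (fun v : ℝ => ((v, t) : ℝ × ℝ)) ((1 : ℝ), (0 : ℝ)) u :=
    (hasDerivAt_id u).prodMk (hasDerivAt_const u t)
  have h2' : HasDerivAt (fun v => fderiv ℝ (uncurry f) (v, t))
      (fderiv ℝ (fderiv ℝ (uncurry f)) (u, t) ((1 : ℝ), (0 : ℝ))) u :=
    hd2.hasFDerivAt.comp_hasDerivAt u h1'
  have h3' : HasDerivAt (fun v => fderiv ℝ (uncurry f) (v, t) ((0 : ℝ), (1 : ℝ)))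
      (fderiv ℝ (fderiv ℝ (uncurry f)) (u, t) ((1 : ℝ), (0 : ℝ)) ((0 : ℝ), (1 : ℝ))) u :=
    (ContinuousLinearMap.apply ℝ F ((0 : ℝ), (1 : ℝ))).hasFDerivAt.comp_hasDerivAt u h2'
  have hR : _root_.spaceDeriv (CSFAux.timeDeriv f) u t
      = fderiv ℝ (fderiv ℝ (uncurry f)) (u, t) ((1 : ℝ), (0 : ℝ)) ((0 : ℝ), (1 : ℝ)) := by
    rw [_root_.spaceDeriv, hevu.deriv_eq, h3'.deriv]
  rw [hL, hR, hsymm]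



section general
variable {Ω : Set (ℝ × ℝ)} {u t : ℝ} {a : ℝ → ℝ → ℝ} {w : ℝ → ℝ → F}

theorem SmOn.mono {f : ℝ → ℝ → F} {Ω' : Set (ℝ × ℝ)} (hf : SmOn f Ω') (hs : Ω ⊆ Ω') :
    SmOn f Ω := fun m => (hf m).mono hs

theorem spaceDeriv_congr {f g : ℝ → ℝ → F} (h : ∀ x, f x t = g x t) :
    _root_.spaceDeriv f u t = _root_.spaceDeriv g u t :=
  congrArg (fun φ => deriv φ u) (funext h)

theorem SmOn.smul (ha : SmOn a Ω) (hw : SmOn w Ω) :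
    SmOn (fun u t => a u t • w u t) Ω := fun m => (ha m).smul (hw m)

theorem SmOn.inv (ha : SmOn a Ω) (h0 : ∀ y ∈ Ω, a y.1 y.2 ≠ 0) :
    SmOn (fun u t => (a u t)⁻¹) Ω := fun m => (ha m).inv fun y hy => h0 y hy

theorem timeDeriv_smul (hΩ : IsOpen Ω) (ha : SmOn a Ω) (hw : SmOn w Ω) (hx : (u, t) ∈ Ω) :
    timeDeriv (fun u t => a u t • w u t) u t
      = a u t • timeDeriv w u t + timeDeriv a u t • w u t :=
  ((ha.hasDerivAt_time hΩ hx).smul (hw.hasDerivAt_time hΩ hx)).deriv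

theorem spaceDeriv_smul (hΩ : IsOpen Ω) (ha : SmOn a Ω) (hw : SmOn w Ω) (hx : (u, t) ∈ Ω) :
    _root_.spaceDeriv (fun u t => a u t • w u t) u t
      = a u t • _root_.spaceDeriv w u t + _root_.spaceDeriv a u t • w u t :=
  ((ha.hasDerivAt_space hΩ hx).smul (hw.hasDerivAt_space hΩ hx)).deriv

theorem timeDeriv_inv (hΩ : IsOpen Ω) (ha : SmOn a Ω) (hx : (u, t) ∈ Ω) (h0 : a u t ≠ 0) :
    timeDeriv (fun u t => (a u t)⁻¹) u t = -timeDeriv a u t / a u t ^ 2 :=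
  ((ha.hasDerivAt_time hΩ hx).inv h0).deriv

end general

section part2
variable {E : Type*} [NormedAddCommGroup E] [InnerProductSpace ℝ E]
variable {Ω : Set (ℝ × ℝ)} {u t : ℝ} {a : ℝ → ℝ → ℝ} {w f g : ℝ → ℝ → E}

variable {E : Type*} [NormedAddCommGroup E] [InnerProductSpace ℝ E]
variable {Ω : Set (ℝ × ℝ)} {u t : ℝ} {a : ℝ → ℝ → ℝ} {w f g : ℝ → ℝ → E}


theorem SmOn.inner (hf : SmOn f Ω) (hg : SmOn g Ω) :
    SmOn (fun u t => ⟪f u t, g u t⟫) Ω := fun m => (hf m).inner ℝ (hg m)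

theorem SmOn.normSq (hf : SmOn f Ω) : SmOn (fun u t => ‖f u t‖ ^ 2) Ω := fun m =>
  ((hf m).inner ℝ (hf m)).congr fun y _ => (real_inner_self_eq_norm_sq _).symm

theorem SmOn.norm (hf : SmOn f Ω) (h0 : ∀ y ∈ Ω, f y.1 y.2 ≠ 0) :
    SmOn (fun u t => ‖f u t‖) Ω := fun m => (hf m).norm ℝ fun y hy => h0 y hy





theorem timeDeriv_inner (hΩ : IsOpen Ω) (hf : SmOn f Ω) (hg : SmOn g Ω) (hx : (u, t) ∈ Ω) :
    timeDeriv (fun u t => ⟪f u t, g u t⟫) u t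
      = ⟪f u t, timeDeriv g u t⟫ + ⟪timeDeriv f u t, g u t⟫ :=
  ((hf.hasDerivAt_time hΩ hx).inner ℝ (hg.hasDerivAt_time hΩ hx)).deriv

theorem spaceDeriv_inner (hΩ : IsOpen Ω) (hf : SmOn f Ω) (hg : SmOn g Ω) (hx : (u, t) ∈ Ω) :
    spaceDeriv (fun u t => ⟪f u t, g u t⟫) u t
      = ⟪f u t, spaceDeriv g u t⟫ + ⟪spaceDeriv f u t, g u t⟫ :=
  ((hf.hasDerivAt_space hΩ hx).inner ℝ (hg.hasDerivAt_space hΩ hx)).deriv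

theorem timeDeriv_normSq (hΩ : IsOpen Ω) (hf : SmOn f Ω) (hx : (u, t) ∈ Ω) :
    timeDeriv (fun u t => ‖f u t‖ ^ 2) u t = 2 * ⟪f u t, timeDeriv f u t⟫ := by
  have hfe : (fun u t : ℝ => ‖f u t‖ ^ 2) = fun u t => ⟪f u t, f u t⟫ := by
    funext u t; exact (real_inner_self_eq_norm_sq _).symm
  rw [hfe, timeDeriv_inner hΩ hf hf hx, real_inner_comm]
  ring

theorem spaceDeriv_normSq (hΩ : IsOpen Ω) (hf : SmOn f Ω) (hx : (u, t) ∈ Ω) :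
    spaceDeriv (fun u t => ‖f u t‖ ^ 2) u t = 2 * ⟪f u t, spaceDeriv f u t⟫ := by
  have hfe : (fun u t : ℝ => ‖f u t‖ ^ 2) = fun u t => ⟪f u t, f u t⟫ := by
    funext u t; exact (real_inner_self_eq_norm_sq _).symm
  rw [hfe, spaceDeriv_inner hΩ hf hf hx, real_inner_comm]
  ring

theorem timeDeriv_norm (hΩ : IsOpen Ω) (hf : SmOn f Ω) (h0 : ∀ y ∈ Ω, f y.1 y.2 ≠ 0) (hx : (u, t) ∈ Ω) :
    timeDeriv (fun u t => ‖f u t‖) u t = ‖f u t‖⁻¹ * ⟪f u t, timeDeriv f u t⟫ := by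
  set N := fun u t => ‖f u t‖ with hN
  have hSN : SmOn N Ω := hf.norm h0
  have h1 : HasDerivAt (fun s => N u s) (timeDeriv N u t) t := hSN.hasDerivAt_time hΩ hx
  have h2 := h1.mul h1
  have h3 : (fun s => N u s * N u s) = fun s => ⟪f u s, f u s⟫ :=
    funext fun s => (real_inner_self_eq_norm_mul_norm _).symm
  have h4 : HasDerivAt (fun s => ⟪f u s, f u s⟫)
      (⟪f u t, timeDeriv f u t⟫ + ⟪timeDeriv f u t, f u t⟫) t :=
    (hf.hasDerivAt_time hΩ hx).inner ℝ (hf.hasDerivAt_time hΩ hx)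
  have h5 := h4.unique (h3 ▸ (show HasDerivAt (fun s => N u s * N u s) _ t from h2))
  have hNne : N u t ≠ 0 := norm_ne_zero_iff.2 (h0 (u, t) hx)
  have h6 : ⟪timeDeriv f u t, f u t⟫ = N u t * timeDeriv N u t := by
    rw [real_inner_comm (timeDeriv f u t)] at h5; linarith
  have h7 : ⟪f u t, timeDeriv f u t⟫ = N u t * timeDeriv N u t := by linarith
  show timeDeriv N u t = (N u t)⁻¹ * ⟪f u t, timeDeriv f u t⟫
  rw [h7]
  field_simp


end part2

end CSFAux

/-- **Evolution of the squared curvature (Lemma 2.3, equation (2.6), flat case).** Along the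
curve shortening flow, `∂ₜ|k|² = ∂ₛ²(|k|²) − 2|∂ₛk|² + 4|k|⁴`. -/
theorem csf_curv_sq_evolution {n : ℕ} (γ : ℝ → ℝ → EuclideanSpace ℝ (Fin n))
    (I : Set ℝ) (hI : I.OrdConnected) (h : IsCSF γ I) :
    ∀ u : ℝ, ∀ t ∈ I,
      HasDerivWithinAt (fun s => ‖curvVec γ u s‖ ^ 2)
        (arcDeriv γ (arcDeriv γ (fun v s => ‖curvVec γ v s‖ ^ 2)) u t
          - 2 * ‖arcDeriv γ (curvVec γ) u t‖ ^ 2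
          + 4 * ‖curvVec γ u t‖ ^ 4) I t := by
  intro u t ht
  by_cases hbot : nhdsWithin t (I \ {t}) = ⊥
  · exact hasDerivWithinAt_iff_hasFDerivWithinAt.mpr
      (HasFDerivWithinAt.of_not_accPt (by rwa [accPt_principal_iff_nhdsWithin, not_neBot]))
  have hU : UniqueDiffWithinAt ℝ I t := by
    have hne : (I \ {t}).Nonempty := by
      rcases Set.eq_empty_or_nonempty (I \ {t}) with he | hne
      · exact absurd (by rw [he, nhdsWithin_empty]) hbot
      · exact hne
    obtain ⟨t', ht'mem⟩ := hne
    have ht'I : t' ∈ I := ht'mem.1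
    have ht'ne : t' ≠ t := ht'mem.2
    have hconv : Convex ℝ I := convex_iff_ordConnected.mpr hI
    have hint : (interior I).Nonempty := by
      rcases lt_or_gt_of_ne ht'ne with hlt | hgt
      · exact ⟨(t' + t) / 2, interior_mono (hI.out ht'I ht)
          (by rw [interior_Icc]; constructor <;> linarith)⟩
      · exact ⟨(t + t') / 2, interior_mono (hI.out ht ht'I)
          (by rw [interior_Icc]; constructor <;> linarith)⟩
    exact uniqueDiffWithinAt_convex hconv hint (subset_closure ht)
  -- basic smoothness setup
  have hsm : ∀ m : ℕ, ContDiff ℝ m (Function.uncurry γ) := fun m => h.smooth.of_le (by exact_mod_cast le_top)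
  have hγ : CSFAux.SmOn γ Set.univ := fun m => (hsm m).contDiffOn
  set Ω : Set (ℝ × ℝ) := {y : ℝ × ℝ | fderiv ℝ (Function.uncurry γ) y (1, 0) ≠ 0} with hΩdef
  have hΩ : IsOpen Ω := by
    have hcont : Continuous fun y => fderiv ℝ (Function.uncurry γ) y ((1 : ℝ), (0 : ℝ)) := by
      exact (ContinuousLinearMap.apply ℝ (EuclideanSpace ℝ (Fin n)) ((1 : ℝ), (0 : ℝ))).continuous.comp
        ((hsm 2).continuous_fderiv (by norm_num))
    exact hcont.isOpen_preimage _ isOpen_compl_singleton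
  have hsd : ∀ u' t' : ℝ, spaceDeriv γ u' t'
      = fderiv ℝ (Function.uncurry γ) (u', t') (1, 0) := fun u' t' =>
    CSFAux.spaceDeriv_eq
      (((hsm 1).differentiable (by norm_num)) (u', t'))
  have hmemΩ : ∀ u' : ℝ, ∀ t' ∈ I, ((u', t') : ℝ × ℝ) ∈ Ω := by
    intro u' t' h'
    rw [hΩdef, Set.mem_setOf_eq, ← hsd]
    exact h.immersed u' t' h'
  have hG0 : ∀ y ∈ Ω, spaceDeriv γ y.1 y.2 ≠ 0 := by
    intro y hy
    rw [hsd]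
    exact hy
  have hG : CSFAux.SmOn (spaceDeriv γ) Ω := (hγ.spaceDeriv isOpen_univ).mono (Set.subset_univ _)
  have hv : CSFAux.SmOn (fun a b => ‖spaceDeriv γ a b‖) Ω := hG.norm hG0
  have hvi : CSFAux.SmOn (fun a b => ‖spaceDeriv γ a b‖⁻¹) Ω :=
    hv.inv fun y hy => norm_ne_zero_iff.2 (hG0 y hy)
  have hT : CSFAux.SmOn (unitTangent γ) Ω := hvi.smul hG
  have hk : CSFAux.SmOn (curvVec γ) Ω := hvi.smul (hT.spaceDeriv hΩ)
  have hDk : CSFAux.SmOn (arcDeriv γ (curvVec γ)) Ω := hvi.smul (hk.spaceDeriv hΩ)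
  have hF : CSFAux.SmOn (fun a b => ‖curvVec γ a b‖ ^ 2) Ω := hk.normSq
  have hxt : ((u, t) : ℝ × ℝ) ∈ Ω := hmemΩ u t ht
  have honline : ∀ u' : ℝ, ((u', t) : ℝ × ℝ) ∈ Ω := fun u' => hmemΩ u' t ht
  have hvne : ∀ u' : ℝ, ‖spaceDeriv γ u' t‖ ≠ 0 := fun u' =>
    norm_ne_zero_iff.2 (hG0 _ (honline u'))
  -- the time derivative exists (as a full derivative)
  have hmain : HasDerivAt (fun s => ‖curvVec γ u s‖ ^ 2)
      (CSFAux.timeDeriv (fun a b => ‖curvVec γ a b‖ ^ 2) u t) t := hF.hasDerivAt_time hΩ hxt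
  -- (a) the flow equation holds for the genuine time derivative
  have hgk : ∀ u' : ℝ, CSFAux.timeDeriv γ u' t = curvVec γ u' t := fun u' =>
    UniqueDiffWithinAt.eq_deriv I hU
      ((hγ.hasDerivAt_time isOpen_univ (Set.mem_univ _)).hasDerivWithinAt) (h.flow u' t ht)
  -- (b) unit tangent has norm one
  have hTT : ∀ u' t' : ℝ, ((u', t') : ℝ × ℝ) ∈ Ω →
      ⟪unitTangent γ u' t', unitTangent γ u' t'⟫ = 1 := by
    intro u' t' hy
    have h0 : ‖spaceDeriv γ u' t'‖ ≠ 0 := norm_ne_zero_iff.2 (hG0 _ hy)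
    show ⟪‖spaceDeriv γ u' t'‖⁻¹ • spaceDeriv γ u' t',
      ‖spaceDeriv γ u' t'‖⁻¹ • spaceDeriv γ u' t'⟫ = 1
    rw [real_inner_smul_left, real_inner_smul_right, real_inner_self_eq_norm_sq]
    field_simp
  -- (c) tangent ⟂ derivative of tangent / curvature
  have hTdu : ∀ u' : ℝ, ⟪unitTangent γ u' t, spaceDeriv (unitTangent γ) u' t⟫ = 0 := by
    intro u'
    have hder := (hT.hasDerivAt_space hΩ (honline u')).inner ℝ (hT.hasDerivAt_space hΩ (honline u'))
    have hconst : (fun x => ⟪unitTangent γ x t, unitTangent γ x t⟫) = fun _ => (1 : ℝ) :=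
      funext fun x => hTT x t (honline x)
    have h0 := (hconst ▸ hder).unique (hasDerivAt_const u' (1 : ℝ))
    have h1 := real_inner_comm (unitTangent γ u' t) (spaceDeriv (unitTangent γ) u' t)
    linarith
  have hTk : ∀ u' : ℝ, ⟪unitTangent γ u' t, curvVec γ u' t⟫ = 0 := by
    intro u'
    show ⟪unitTangent γ u' t, ‖spaceDeriv γ u' t‖⁻¹ • spaceDeriv (unitTangent γ) u' t⟫ = 0
    rw [real_inner_smul_right, hTdu u', mul_zero]
  have hduT : ∀ u' : ℝ, spaceDeriv (unitTangent γ) u' t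
      = ‖spaceDeriv γ u' t‖ • curvVec γ u' t := by
    intro u'
    show _ = ‖spaceDeriv γ u' t‖ • (‖spaceDeriv γ u' t‖⁻¹ • spaceDeriv (unitTangent γ) u' t)
    rw [smul_smul, mul_inv_cancel₀ (hvne u'), one_smul]
  -- (d)
  have hTdk : ∀ u' : ℝ, ⟪unitTangent γ u' t, spaceDeriv (curvVec γ) u' t⟫
      = -(‖spaceDeriv γ u' t‖ * ‖curvVec γ u' t‖ ^ 2) := by
    intro u'
    have hder := (hT.hasDerivAt_space hΩ (honline u')).inner ℝ (hk.hasDerivAt_space hΩ (honline u'))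
    have hconst : (fun x => ⟪unitTangent γ x t, curvVec γ x t⟫) = fun _ => (0 : ℝ) :=
      funext fun x => hTk x
    have h0 := (hconst ▸ hder).unique (hasDerivAt_const u' (0 : ℝ))
    rw [hduT u', real_inner_smul_left, real_inner_self_eq_norm_sq] at h0
    linarith
  -- (e) Schwarz for γ plus the flow equation
  have htG : ∀ u' : ℝ, CSFAux.timeDeriv (spaceDeriv γ) u' t = spaceDeriv (curvVec γ) u' t := by
    intro u'
    rw [hγ.symm isOpen_univ (Set.mem_univ _)]
    exact CSFAux.spaceDeriv_congr fun x => hgk x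
  -- (f) evolution of the speed
  have htv : ∀ u' : ℝ, CSFAux.timeDeriv (fun a b => ‖spaceDeriv γ a b‖) u' t
      = -(‖spaceDeriv γ u' t‖ * ‖curvVec γ u' t‖ ^ 2) := by
    intro u'
    rw [CSFAux.timeDeriv_norm hΩ hG hG0 (honline u'), htG u']
    have hGT : spaceDeriv γ u' t = ‖spaceDeriv γ u' t‖ • unitTangent γ u' t := by
      show _ = ‖spaceDeriv γ u' t‖ • (‖spaceDeriv γ u' t‖⁻¹ • spaceDeriv γ u' t)
      rw [smul_smul, mul_inv_cancel₀ (hvne u'), one_smul]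
    have h2 : ⟪spaceDeriv γ u' t, spaceDeriv (curvVec γ) u' t⟫
        = ‖spaceDeriv γ u' t‖ * -(‖spaceDeriv γ u' t‖ * ‖curvVec γ u' t‖ ^ 2) := by
      conv_lhs => rw [hGT]
      rw [real_inner_smul_left, hTdk u']
    rw [h2]
    field_simp [hvne u']
  -- evolution of the inverse speed
  have htvi : ∀ u' : ℝ, CSFAux.timeDeriv (fun a b => ‖spaceDeriv γ a b‖⁻¹) u' t
      = ‖spaceDeriv γ u' t‖⁻¹ * ‖curvVec γ u' t‖ ^ 2 := by
    intro u'
    rw [CSFAux.timeDeriv_inv hΩ hv (honline u') (hvne u'), htv u']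
    field_simp [hvne u']
  -- (g) evolution of the unit tangent
  have htT : ∀ u' : ℝ, CSFAux.timeDeriv (unitTangent γ) u' t
      = ‖curvVec γ u' t‖ ^ 2 • unitTangent γ u' t + arcDeriv γ (curvVec γ) u' t := by
    intro u'
    have hstep := CSFAux.timeDeriv_smul hΩ hvi hG (honline u')
    rw [show CSFAux.timeDeriv (unitTangent γ) u' t
        = CSFAux.timeDeriv (fun a b => ‖spaceDeriv γ a b‖⁻¹ • spaceDeriv γ a b) u' t from rfl,
      hstep, htG u', htvi u']
    show ‖spaceDeriv γ u' t‖⁻¹ • spaceDeriv (curvVec γ) u' t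
        + (‖spaceDeriv γ u' t‖⁻¹ * ‖curvVec γ u' t‖ ^ 2) • spaceDeriv γ u' t
      = ‖curvVec γ u' t‖ ^ 2 • (‖spaceDeriv γ u' t‖⁻¹ • spaceDeriv γ u' t)
        + ‖spaceDeriv γ u' t‖⁻¹ • spaceDeriv (curvVec γ) u' t
    module
  -- (h) commute derivatives on the unit tangent
  have hduT_t : CSFAux.timeDeriv (spaceDeriv (unitTangent γ)) u t
      = spaceDeriv (CSFAux.timeDeriv (unitTangent γ)) u t := hT.symm hΩ hxt
  have hsdT : spaceDeriv (CSFAux.timeDeriv (unitTangent γ)) u t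
      = ‖curvVec γ u t‖ ^ 2 • spaceDeriv (unitTangent γ) u t
        + spaceDeriv (fun a b => ‖curvVec γ a b‖ ^ 2) u t • unitTangent γ u t
        + spaceDeriv (arcDeriv γ (curvVec γ)) u t := by
    have hcongr : spaceDeriv (CSFAux.timeDeriv (unitTangent γ)) u t
        = spaceDeriv (fun a b => ‖curvVec γ a b‖ ^ 2 • unitTangent γ a b
            + arcDeriv γ (curvVec γ) a b) u t := CSFAux.spaceDeriv_congr fun x => htT x
    rw [hcongr]
    exact (((hF.hasDerivAt_space hΩ hxt).smul (hT.hasDerivAt_space hΩ hxt)).add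
      (hDk.hasDerivAt_space hΩ hxt)).deriv
  -- (i) evolution of the curvature vector
  have htk : CSFAux.timeDeriv (curvVec γ) u t
      = (2 * ‖curvVec γ u t‖ ^ 2) • curvVec γ u t
        + arcDeriv γ (fun a b => ‖curvVec γ a b‖ ^ 2) u t • unitTangent γ u t
        + arcDeriv γ (arcDeriv γ (curvVec γ)) u t := by
    have hstep := CSFAux.timeDeriv_smul hΩ hvi (hT.spaceDeriv hΩ) hxt
    rw [show CSFAux.timeDeriv (curvVec γ) u t
        = CSFAux.timeDeriv (fun a b => ‖spaceDeriv γ a b‖⁻¹ • spaceDeriv (unitTangent γ) a b) u t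
          from rfl,
      hstep, hduT_t, hsdT, htvi u]
    show ‖spaceDeriv γ u t‖⁻¹ • (‖curvVec γ u t‖ ^ 2 • spaceDeriv (unitTangent γ) u t
          + spaceDeriv (fun a b => ‖curvVec γ a b‖ ^ 2) u t • unitTangent γ u t
          + spaceDeriv (arcDeriv γ (curvVec γ)) u t)
        + (‖spaceDeriv γ u t‖⁻¹ * ‖curvVec γ u t‖ ^ 2) • spaceDeriv (unitTangent γ) u t
      = (2 * ‖curvVec γ u t‖ ^ 2) • (‖spaceDeriv γ u t‖⁻¹ • spaceDeriv (unitTangent γ) u t)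
        + (‖spaceDeriv γ u t‖⁻¹ * spaceDeriv (fun a b => ‖curvVec γ a b‖ ^ 2) u t)
            • unitTangent γ u t
        + ‖spaceDeriv γ u t‖⁻¹ • spaceDeriv (arcDeriv γ (curvVec γ)) u t
    module
  -- (j) evolution of the squared curvature
  have htF : CSFAux.timeDeriv (fun a b => ‖curvVec γ a b‖ ^ 2) u t
      = 4 * (‖curvVec γ u t‖ ^ 2) ^ 2
        + 2 * ⟪curvVec γ u t, arcDeriv γ (arcDeriv γ (curvVec γ)) u t⟫ := by
    have hkT : ⟪curvVec γ u t, unitTangent γ u t⟫ = 0 := by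
      rw [real_inner_comm]; exact hTk u
    rw [CSFAux.timeDeriv_normSq hΩ hk hxt, htk, inner_add_right, inner_add_right,
      real_inner_smul_right, real_inner_smul_right, real_inner_self_eq_norm_sq, hkT]
    ring
  -- (k) the arclength Laplacian of the squared curvature
  have hDF2 : ∀ x : ℝ, arcDeriv γ (fun a b => ‖curvVec γ a b‖ ^ 2) x t
      = 2 * ⟪curvVec γ x t, arcDeriv γ (curvVec γ) x t⟫ := by
    intro x
    show ‖spaceDeriv γ x t‖⁻¹ • spaceDeriv (fun a b => ‖curvVec γ a b‖ ^ 2) x t = _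
    rw [show arcDeriv γ (curvVec γ) x t
        = ‖spaceDeriv γ x t‖⁻¹ • spaceDeriv (curvVec γ) x t from rfl,
      real_inner_smul_right, CSFAux.spaceDeriv_normSq hΩ hk (honline x)]
    simp only [smul_eq_mul]
    ring
  have hfinal : arcDeriv γ (arcDeriv γ (fun v s => ‖curvVec γ v s‖ ^ 2)) u t
      = 2 * ‖arcDeriv γ (curvVec γ) u t‖ ^ 2
        + 2 * ⟪curvVec γ u t, arcDeriv γ (arcDeriv γ (curvVec γ)) u t⟫ := by
    have hc : spaceDeriv (arcDeriv γ (fun a b => ‖curvVec γ a b‖ ^ 2)) u t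
        = spaceDeriv (fun a b => 2 * ⟪curvVec γ a b, arcDeriv γ (curvVec γ) a b⟫) u t :=
      CSFAux.spaceDeriv_congr hDF2
    have hder := ((hk.hasDerivAt_space hΩ hxt).inner ℝ (hDk.hasDerivAt_space hΩ hxt)).const_mul
      (2 : ℝ)
    show ‖spaceDeriv γ u t‖⁻¹ • spaceDeriv (arcDeriv γ (fun a b => ‖curvVec γ a b‖ ^ 2)) u t = _
    rw [hc, show spaceDeriv (fun a b => 2 * ⟪curvVec γ a b, arcDeriv γ (curvVec γ) a b⟫) u t
        = 2 * (⟪curvVec γ u t, spaceDeriv (arcDeriv γ (curvVec γ)) u t⟫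
            + ⟪spaceDeriv (curvVec γ) u t, arcDeriv γ (curvVec γ) u t⟫) from hder.deriv,
      show arcDeriv γ (arcDeriv γ (curvVec γ)) u t
        = ‖spaceDeriv γ u t‖⁻¹ • spaceDeriv (arcDeriv γ (curvVec γ)) u t from rfl,
      real_inner_smul_right, smul_eq_mul]
    have hB : ⟪spaceDeriv (curvVec γ) u t, arcDeriv γ (curvVec γ) u t⟫
        = ‖spaceDeriv γ u t‖ * ‖arcDeriv γ (curvVec γ) u t‖ ^ 2 := by
      have hkDk : spaceDeriv (curvVec γ) u t
          = ‖spaceDeriv γ u t‖ • arcDeriv γ (curvVec γ) u t := by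
        show _ = ‖spaceDeriv γ u t‖ • (‖spaceDeriv γ u t‖⁻¹ • spaceDeriv (curvVec γ) u t)
        rw [smul_smul, mul_inv_cancel₀ (hvne u), one_smul]
      rw [hkDk, real_inner_smul_left, real_inner_self_eq_norm_sq]
    rw [hB]
    field_simp [hvne u]
    ring
  -- conclusion
  have hval : CSFAux.timeDeriv (fun a b => ‖curvVec γ a b‖ ^ 2) u t
      = arcDeriv γ (arcDeriv γ (fun v s => ‖curvVec γ v s‖ ^ 2)) u t
        - 2 * ‖arcDeriv γ (curvVec γ) u t‖ ^ 2 + 4 * ‖curvVec γ u t‖ ^ 4 := by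
    rw [htF, hfinal, show ‖curvVec γ u t‖ ^ 4 = (‖curvVec γ u t‖ ^ 2) ^ 2 by ring]
    ring
  exact hval ▸ hmain.hasDerivWithinAt


end
end

section
/- Let γ : ℝ × I → ℝⁿ be a solution of the curve shortening flow. Then the curvature vector satisfies ∂ₜk = ∂ₛ²k + ∂ₛ(|k|²)·T + 2·|k|²·k. -/
open Set Filter MeasureTheory intervalIntegral
open scoped RealInnerProductSpace ENNReal

noncomputable section

section CSFHelpers

open Topology

local notation "∞'" => ((⊤ : ℕ∞) : WithTop ℕ∞)

variable {F : Type*} [NormedAddCommGroup F] [NormedSpace ℝ F]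

/-- The (full, two-sided) time derivative of a time-dependent map, via `fderiv`. -/
def timeDeriv (f : ℝ → ℝ → F) (u t : ℝ) : F :=
  fderiv ℝ (Function.uncurry f) (u, t) (0, 1)

lemma csf_hasDerivWithinAt_of_subsingleton {f : ℝ → F} {d : F} {s : Set ℝ} {x : ℝ}
    (hs : s ⊆ {x}) : HasDerivWithinAt f d s x := by
  have h : HasDerivWithinAt f d {x} x := by
    simp only [HasDerivWithinAt, HasFDerivWithinAt, nhdsWithin_singleton]
    rw [hasDerivAtFilter_iff_isLittleO, Filter.prod_pure_pure, Asymptotics.isLittleO_pure]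
    simp
  exact h.mono hs

lemma csf_hasDerivAt_space {f : ℝ → ℝ → F} {u t : ℝ}
    (h : DifferentiableAt ℝ (Function.uncurry f) (u, t)) :
    HasDerivAt (fun v => f v t) (fderiv ℝ (Function.uncurry f) (u, t) (1, 0)) u := by
  have h2 : HasDerivAt (fun v : ℝ => (v, t)) ((1 : ℝ), (0 : ℝ)) u :=
    (hasDerivAt_id u).prodMk (hasDerivAt_const u t)
  exact HasFDerivAt.comp_hasDerivAt (f := fun v : ℝ => (v, t)) u h.hasFDerivAt h2

lemma csf_hasDerivAt_time {f : ℝ → ℝ → F} {u t : ℝ}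
    (h : DifferentiableAt ℝ (Function.uncurry f) (u, t)) :
    HasDerivAt (fun s => f u s) (timeDeriv f u t) t := by
  have h2 : HasDerivAt (fun s : ℝ => (u, s)) ((0 : ℝ), (1 : ℝ)) t :=
    (hasDerivAt_const t u).prodMk (hasDerivAt_id t)
  exact HasFDerivAt.comp_hasDerivAt (f := fun s : ℝ => (u, s)) t h.hasFDerivAt h2

lemma csf_hasDerivAt_space' {f : ℝ → ℝ → F} {u t : ℝ}
    (h : DifferentiableAt ℝ (Function.uncurry f) (u, t)) :
    HasDerivAt (fun v => f v t) (spaceDeriv f u t) u :=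
  (csf_hasDerivAt_space h).differentiableAt.hasDerivAt

lemma csf_spaceDeriv_eq {f : ℝ → ℝ → F} {u t : ℝ}
    (h : DifferentiableAt ℝ (Function.uncurry f) (u, t)) :
    spaceDeriv f u t = fderiv ℝ (Function.uncurry f) (u, t) (1, 0) :=
  (csf_hasDerivAt_space h).deriv

lemma csf_infty_add_one : ∞' + 1 ≤ ∞' := by exact_mod_cast le_refl _

lemma csf_one_le_infty : (1 : WithTop ℕ∞) ≤ ∞' := by exact_mod_cast le_top

lemma csf_diffAt_of_contDiffOn {f : ℝ × ℝ → F} {S : Set (ℝ × ℝ)} (hS : IsOpen S)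
    (hf : ContDiffOn ℝ ∞' f S) {z : ℝ × ℝ} (hz : z ∈ S) :
    DifferentiableAt ℝ f z :=
  (hf.differentiableOn (by simp)).differentiableAt (hS.mem_nhds hz)

lemma csf_contDiffOn_fderiv_apply {f : ℝ × ℝ → F} {S : Set (ℝ × ℝ)} (hS : IsOpen S)
    (hf : ContDiffOn ℝ ∞' f S) (w : ℝ × ℝ) :
    ContDiffOn ℝ ∞' (fun z => fderiv ℝ f z w) S :=
  (hf.fderiv_of_isOpen hS csf_infty_add_one).clm_apply contDiffOn_const

lemma csf_contDiffOn_spaceDeriv {f : ℝ → ℝ → F} {S : Set (ℝ × ℝ)} (hS : IsOpen S)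
    (hf : ContDiffOn ℝ ∞' (Function.uncurry f) S) :
    ContDiffOn ℝ ∞' (Function.uncurry (spaceDeriv f)) S := by
  refine (csf_contDiffOn_fderiv_apply hS hf ((1 : ℝ), (0 : ℝ))).congr ?_
  rintro ⟨a, b⟩ hz
  exact (csf_spaceDeriv_eq (csf_diffAt_of_contDiffOn hS hf hz)).symm ▸ rfl

/-- Clairaut-type theorem: the time derivative of the space derivative. -/
lemma csf_clairaut {f : ℝ → ℝ → F} {S : Set (ℝ × ℝ)} (hS : IsOpen S)
    (hf : ContDiffOn ℝ ∞' (Function.uncurry f) S) {u t : ℝ} (hz : (u, t) ∈ S) :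
    HasDerivAt (fun s => spaceDeriv f u s) (deriv (fun w => timeDeriv f w t) u) t := by
  set F' := fderiv ℝ (Function.uncurry f) with hF'def
  have hF' : ContDiffOn ℝ ∞' F' S := hf.fderiv_of_isOpen hS csf_infty_add_one
  have hdF' : DifferentiableAt ℝ F' (u, t) := csf_diffAt_of_contDiffOn hS hF' hz
  set f'' := fderiv ℝ F' (u, t) with hf''def
  have hev : ∀ᶠ y in 𝓝 (u, t), HasFDerivAt (Function.uncurry f) (F' y) y := by
    filter_upwards [hS.mem_nhds hz] with y hy
    exact (csf_diffAt_of_contDiffOn hS hf hy).hasFDerivAt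
  have hsymm := second_derivative_symmetric_of_eventually hev hdF'.hasFDerivAt
    ((0 : ℝ), (1 : ℝ)) ((1 : ℝ), (0 : ℝ))
  have happ : ∀ v : ℝ × ℝ, HasFDerivAt (fun z => F' z v)
      ((ContinuousLinearMap.apply ℝ F v).comp f'') (u, t) :=
    fun v => (ContinuousLinearMap.apply ℝ F v).hasFDerivAt.comp (u, t) hdF'.hasFDerivAt
  have hA : HasDerivAt (fun s => F' (u, s) ((1 : ℝ), (0 : ℝ))) (f'' (0, 1) (1, 0)) t := by
    have h2 : HasDerivAt (fun s : ℝ => (u, s)) ((0 : ℝ), (1 : ℝ)) t :=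
      (hasDerivAt_const t u).prodMk (hasDerivAt_id t)
    exact HasFDerivAt.comp_hasDerivAt (f := fun s : ℝ => (u, s)) t (happ (1, 0)) h2
  have hC : HasDerivAt (fun w => F' (w, t) ((0 : ℝ), (1 : ℝ))) (f'' (1, 0) (0, 1)) u := by
    have h2 : HasDerivAt (fun w : ℝ => (w, t)) ((1 : ℝ), (0 : ℝ)) u :=
      (hasDerivAt_id u).prodMk (hasDerivAt_const u t)
    exact HasFDerivAt.comp_hasDerivAt (f := fun w : ℝ => (w, t)) u (happ (0, 1)) h2
  have hB : (fun s => spaceDeriv f u s) =ᶠ[𝓝 t] fun s => F' (u, s) ((1 : ℝ), (0 : ℝ)) := by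
    have hcont : Continuous (fun s : ℝ => (u, s)) := by fun_prop
    filter_upwards [hcont.continuousAt.preimage_mem_nhds (hS.mem_nhds hz)] with s hs
    exact csf_spaceDeriv_eq (csf_diffAt_of_contDiffOn hS hf hs)
  have hres : HasDerivAt (fun s => spaceDeriv f u s) (f'' (0, 1) (1, 0)) t :=
    hA.congr_of_eventuallyEq hB
  have hder : deriv (fun w => timeDeriv f w t) u = f'' (1, 0) (0, 1) := hC.deriv
  rw [hder, ← hsymm]
  exact hres

variable {E : Type*} [NormedAddCommGroup E] [InnerProductSpace ℝ E]

lemma csf_hasDerivAt_norm {p : ℝ → E} {p' : E} {s : ℝ} (hp : HasDerivAt p p' s)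
    (h0 : p s ≠ 0) :
    HasDerivAt (fun σ => ‖p σ‖) (‖p s‖⁻¹ * ⟪p s, p'⟫) s := by
  have h1 : HasDerivAt (fun σ => ⟪p σ, p σ⟫) (⟪p s, p'⟫ + ⟪p', p s⟫) s := hp.inner ℝ hp
  have h2 : (⟪p s, p s⟫) ≠ 0 := inner_self_ne_zero.mpr h0
  have h3 := (Real.hasDerivAt_sqrt h2).comp s h1
  have h4 : (Real.sqrt ∘ fun σ => ⟪p σ, p σ⟫) = fun σ => ‖p σ‖ := funext fun σ => by
    simp [Function.comp, real_inner_self_eq_norm_mul_norm, Real.sqrt_mul_self (norm_nonneg _)]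
  rw [h4] at h3
  refine h3.congr_deriv (Eq.symm ?_)
  rw [real_inner_self_eq_norm_mul_norm, Real.sqrt_mul_self (norm_nonneg _),
    real_inner_comm p' (p s)]
  have hn : ‖p s‖ ≠ 0 := norm_ne_zero_iff.mpr h0
  field_simp
  ring

end CSFHelpers

/-- **Evolution of the curvature vector (Theorem 2.1 of Andrews–Baker, Euclidean form).** Along
the curve shortening flow, `∂ₜk = ∂ₛ²k + ∂ₛ(|k|²)·T + 2|k|²·k`. -/
theorem csf_curv_evolution {n : ℕ} (γ : ℝ → ℝ → EuclideanSpace ℝ (Fin n))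
    (I : Set ℝ) (hI : I.OrdConnected) (h : IsCSF γ I) :
    ∀ u : ℝ, ∀ t ∈ I,
      HasDerivWithinAt (fun s => curvVec γ u s)
        (arcDeriv γ (arcDeriv γ (curvVec γ)) u t
          + (arcDeriv γ (fun v s => ‖curvVec γ v s‖ ^ 2) u t) • unitTangent γ u t
          + (2 * ‖curvVec γ u t‖ ^ 2) • curvVec γ u t) I t := by
  intro u t ht
  by_cases hsub : I ⊆ {t}
  · exact csf_hasDerivWithinAt_of_subsingleton hsub
  obtain ⟨t', ht', hne⟩ := not_subset.mp hsub
  have hne' : t' ≠ t := hne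
  -- `I` has unique differentiability
  have hminI : min t' t ∈ I := by rcases min_choice t' t with hc | hc <;> rw [hc] <;> assumption
  have hmaxI : max t' t ∈ I := by rcases max_choice t' t with hc | hc <;> rw [hc] <;> assumption
  have hlt : min t' t < max t' t := min_lt_max.mpr hne'
  have hint : (interior I).Nonempty := by
    refine ⟨(min t' t + max t' t) / 2, ?_⟩
    have hIoo : Ioo (min t' t) (max t' t) ⊆ I :=
      fun x hx => hI.out hminI hmaxI ⟨le_of_lt hx.1, le_of_lt hx.2⟩
    exact interior_maximal hIoo isOpen_Ioo ⟨by linarith, by linarith⟩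
  have huniq : UniqueDiffOn ℝ I :=
    uniqueDiffOn_convex (convex_iff_ordConnected.mpr hI) hint
  -- smoothness setup
  have hγ : ContDiff ℝ (((⊤ : ℕ∞) : WithTop ℕ∞)) (Function.uncurry γ) := h.smooth.of_le (by simp)
  have hγd : Differentiable ℝ (Function.uncurry γ) := hγ.differentiable (by simp)
  have hP : ContDiff ℝ (((⊤ : ℕ∞) : WithTop ℕ∞)) (Function.uncurry (spaceDeriv γ)) := by
    have he : Function.uncurry (spaceDeriv γ)
        = fun z : ℝ × ℝ => fderiv ℝ (Function.uncurry γ) z ((1 : ℝ), (0 : ℝ)) := by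
      funext z
      have := csf_spaceDeriv_eq (f := γ) (u := z.1) (t := z.2) (hγd _)
      exact this
    rw [he]
    exact (hγ.fderiv_right csf_infty_add_one).clm_apply contDiff_const
  set S : Set (ℝ × ℝ) := {z : ℝ × ℝ | spaceDeriv γ z.1 z.2 ≠ 0} with hSdef
  have hSopen : IsOpen S := by
    have : S = Function.uncurry (spaceDeriv γ) ⁻¹' ({0}ᶜ) := rfl
    rw [this]
    exact isOpen_compl_singleton.preimage hP.continuous
  have hIS : ∀ w s, s ∈ I → (w, s) ∈ S := fun w s hs => h.immersed w s hs
  -- smoothness of T and k on S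
  have hTS : ContDiffOn ℝ (((⊤ : ℕ∞) : WithTop ℕ∞)) (Function.uncurry (unitTangent γ)) S := by
    intro z hz
    have h1 : ContDiffAt ℝ (((⊤ : ℕ∞) : WithTop ℕ∞)) (Function.uncurry (spaceDeriv γ)) z :=
      hP.contDiffAt
    have hz' : Function.uncurry (spaceDeriv γ) z ≠ 0 := hz
    exact (((h1.norm ℝ hz').inv (norm_ne_zero_iff.mpr hz')).smul h1).contDiffWithinAt
  have hkS : ContDiffOn ℝ (((⊤ : ℕ∞) : WithTop ℕ∞)) (Function.uncurry (curvVec γ)) S := by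
    have hTS' := csf_contDiffOn_spaceDeriv hSopen hTS
    intro z hz
    have hz' : Function.uncurry (spaceDeriv γ) z ≠ 0 := hz
    exact ((hP.contDiffAt.norm ℝ hz').inv
      (norm_ne_zero_iff.mpr hz')).contDiffWithinAt.smul (hTS' z hz)
  have hkS' := csf_contDiffOn_spaceDeriv hSopen hkS
  -- time derivative of γ is k on I
  have hq : ∀ w, ∀ s ∈ I, timeDeriv γ w s = curvVec γ w s := by
    intro w s hs
    have h1 : HasDerivWithinAt (fun σ => γ w σ) (timeDeriv γ w s) I s :=
      (csf_hasDerivAt_time (hγd _)).hasDerivWithinAt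
    have h2 := h.flow w s hs
    rw [← h1.derivWithin (huniq s hs), ← h2.derivWithin (huniq s hs)]
  -- time derivative of ∂ᵤγ is ∂ᵤ k on I
  have hF4 : ∀ w, ∀ s ∈ I,
      HasDerivAt (fun σ => spaceDeriv γ w σ) (spaceDeriv (curvVec γ) w s) s := by
    intro w s hs
    have h1 := csf_clairaut isOpen_univ hγ.contDiffOn (mem_univ ((w : ℝ), s))
    have e : (fun v => timeDeriv γ v s) = fun v => curvVec γ v s :=
      funext fun v => hq v s hs
    rw [e] at h1
    exact h1
  -- space derivatives of T and k
  have hdT : ∀ w, ∀ s ∈ I,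
      HasDerivAt (fun v => unitTangent γ v s) (spaceDeriv (unitTangent γ) w s) w :=
    fun w s hs => csf_hasDerivAt_space' (csf_diffAt_of_contDiffOn hSopen hTS (hIS w s hs))
  have hdk : ∀ w, ∀ s ∈ I,
      HasDerivAt (fun v => curvVec γ v s) (spaceDeriv (curvVec γ) w s) w :=
    fun w s hs => csf_hasDerivAt_space' (csf_diffAt_of_contDiffOn hSopen hkS (hIS w s hs))
  -- Frenet identities
  have h5a : ∀ w, ∀ s ∈ I, ‖unitTangent γ w s‖ = 1 := by
    intro w s hs
    have h0 : ‖spaceDeriv γ w s‖ ≠ 0 := norm_ne_zero_iff.mpr (h.immersed w s hs)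
    rw [unitTangent, arcDeriv, norm_smul, norm_inv, norm_norm, inv_mul_cancel₀ h0]
  have h5b : ∀ w, ∀ s ∈ I, ⟪unitTangent γ w s, curvVec γ w s⟫ = 0 := by
    intro w s hs
    have hT0 : ⟪unitTangent γ w s, spaceDeriv (unitTangent γ) w s⟫ = 0 := by
      have hconst : (fun v => ⟪unitTangent γ v s, unitTangent γ v s⟫) = fun _ => (1 : ℝ) :=
        funext fun v => by
          rw [real_inner_self_eq_norm_mul_norm, h5a v s hs]; norm_num
      have hd := (hdT w s hs).inner ℝ (hdT w s hs)
      rw [hconst] at hd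
      have hz := hd.unique (hasDerivAt_const w (1 : ℝ))
      have hcomm := real_inner_comm (unitTangent γ w s) (spaceDeriv (unitTangent γ) w s)
      linarith
    rw [curvVec, arcDeriv, real_inner_smul_right, hT0, mul_zero]
  have h5c : ∀ w, ∀ s ∈ I, ⟪unitTangent γ w s, spaceDeriv (curvVec γ) w s⟫
      = -(‖curvVec γ w s‖ ^ 2 * ‖spaceDeriv γ w s‖) := by
    intro w s hs
    have h0 : ‖spaceDeriv γ w s‖ ≠ 0 := norm_ne_zero_iff.mpr (h.immersed w s hs)
    have hconst : (fun v => ⟪unitTangent γ v s, curvVec γ v s⟫) = fun _ => (0 : ℝ) :=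
      funext fun v => h5b v s hs
    have hd := (hdT w s hs).inner ℝ (hdk w s hs)
    rw [hconst] at hd
    have hsum := hd.unique (hasDerivAt_const w (0 : ℝ))
    have hTk : spaceDeriv (unitTangent γ) w s = ‖spaceDeriv γ w s‖ • curvVec γ w s := by
      rw [curvVec, arcDeriv, smul_inv_smul₀ h0]
    rw [hTk, real_inner_smul_left, real_inner_self_eq_norm_mul_norm] at hsum
    rw [pow_two]
    nlinarith [hsum]
  -- time derivative of ‖∂ᵤγ‖
  have h6 : ∀ w, ∀ s ∈ I, HasDerivAt (fun σ => ‖spaceDeriv γ w σ‖)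
      (-(‖curvVec γ w s‖ ^ 2 * ‖spaceDeriv γ w s‖)) s := by
    intro w s hs
    have h0 : spaceDeriv γ w s ≠ 0 := h.immersed w s hs
    have hn0 : ‖spaceDeriv γ w s‖ ≠ 0 := norm_ne_zero_iff.mpr h0
    have hder := csf_hasDerivAt_norm (hF4 w s hs) h0
    convert hder using 1
    have hp : ⟪spaceDeriv γ w s, spaceDeriv (curvVec γ) w s⟫
        = ‖spaceDeriv γ w s‖ * ⟪unitTangent γ w s, spaceDeriv (curvVec γ) w s⟫ := by
      conv_lhs => rw [show spaceDeriv γ w s = ‖spaceDeriv γ w s‖ • unitTangent γ w s by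
        rw [unitTangent, arcDeriv, smul_inv_smul₀ hn0]]
      rw [real_inner_smul_left]
    rw [hp, h5c w s hs]
    field_simp
  -- time derivative of ‖∂ᵤγ‖⁻¹
  have hinvd : ∀ w, ∀ s ∈ I, HasDerivAt (fun σ => ‖spaceDeriv γ w σ‖⁻¹)
      (‖curvVec γ w s‖ ^ 2 * ‖spaceDeriv γ w s‖⁻¹) s := by
    intro w s hs
    have hn0 : ‖spaceDeriv γ w s‖ ≠ 0 := norm_ne_zero_iff.mpr (h.immersed w s hs)
    have := (h6 w s hs).inv hn0
    refine this.congr_deriv (Eq.symm ?_)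
    field_simp
  -- time derivative of T
  have h7 : ∀ w, ∀ s ∈ I, HasDerivAt (fun σ => unitTangent γ w σ)
      (arcDeriv γ (curvVec γ) w s + (‖curvVec γ w s‖ ^ 2) • unitTangent γ w s) s := by
    intro w s hs
    have hprod := (hinvd w s hs).smul (hF4 w s hs)
    have hfun : (fun σ => ‖spaceDeriv γ w σ‖⁻¹ • spaceDeriv γ w σ)
        = fun σ => unitTangent γ w σ := rfl
    change HasDerivAt (fun σ => unitTangent γ w σ) _ s at hprod
    convert hprod using 1
    rw [arcDeriv, unitTangent, arcDeriv, smul_smul]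
  have h8 : ∀ w, ∀ s ∈ I, timeDeriv (unitTangent γ) w s
      = arcDeriv γ (curvVec γ) w s + (‖curvVec γ w s‖ ^ 2) • unitTangent γ w s :=
    fun w s hs =>
      (csf_hasDerivAt_time (csf_diffAt_of_contDiffOn hSopen hTS (hIS w s hs))).unique
        (h7 w s hs)
  -- time derivative of ∂ᵤT
  have h9 := csf_clairaut hSopen hTS (hIS u t ht)
  -- compute the space derivative of the time derivative of T
  have harc : ContDiffOn ℝ (((⊤ : ℕ∞) : WithTop ℕ∞))
      (Function.uncurry (arcDeriv γ (curvVec γ))) S := by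
    intro z hz
    have hz' : Function.uncurry (spaceDeriv γ) z ≠ 0 := hz
    exact ((hP.contDiffAt.norm ℝ hz').inv
      (norm_ne_zero_iff.mpr hz')).contDiffWithinAt.smul (hkS' z hz)
  have hsq : ContDiffOn ℝ (((⊤ : ℕ∞) : WithTop ℕ∞))
      (Function.uncurry (fun v s => ‖curvVec γ v s‖ ^ 2)) S := by
    intro z hz
    exact (hkS z hz).norm_sq ℝ
  have hA : HasDerivAt (fun w => arcDeriv γ (curvVec γ) w t)
      (spaceDeriv (arcDeriv γ (curvVec γ)) u t) u :=
    csf_hasDerivAt_space' (csf_diffAt_of_contDiffOn hSopen harc (hIS u t ht))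
  have hB2 : HasDerivAt (fun w => ‖curvVec γ w t‖ ^ 2)
      (spaceDeriv (fun v s => ‖curvVec γ v s‖ ^ 2) u t) u :=
    csf_hasDerivAt_space' (csf_diffAt_of_contDiffOn hSopen hsq (hIS u t ht))
  have h10 : deriv (fun w => timeDeriv (unitTangent γ) w t) u
      = spaceDeriv (arcDeriv γ (curvVec γ)) u t
        + ((‖curvVec γ u t‖ ^ 2) • spaceDeriv (unitTangent γ) u t
          + (spaceDeriv (fun v s => ‖curvVec γ v s‖ ^ 2) u t) • unitTangent γ u t) := by
    have e : (fun w => timeDeriv (unitTangent γ) w t)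
        = fun w => arcDeriv γ (curvVec γ) w t
          + (‖curvVec γ w t‖ ^ 2) • unitTangent γ w t :=
      funext fun w => h8 w t ht
    rw [e]
    exact (hA.add (hB2.smul (hdT u t ht))).deriv
  rw [h10] at h9
  -- final assembly
  have hfinal := (hinvd u t ht).smul h9
  have hfun : (fun σ => ‖spaceDeriv γ u σ‖⁻¹ • spaceDeriv (unitTangent γ) u σ)
      = fun σ => curvVec γ u σ := rfl
  change HasDerivAt (fun σ => curvVec γ u σ) _ t at hfinal
  refine HasDerivAt.hasDerivWithinAt ?_
  refine hfinal.congr_deriv (Eq.symm ?_)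
  simp only [curvVec, arcDeriv, unitTangent, smul_eq_mul]
  module

end
end
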